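/- If a simplicial complex K on [m] has a top class (a nonzero α ∈ H̃^{n-1}(K;ℤ) restricting to zero in H̃^{n-1}(K_I) for every proper I ⊊ [m]), then K is not wedge decomposable, i.e., K cannot be written as L ∪_{Δ^t} M for subcomplexes L, M ≠ K glued along a nonempty simplex. -/
import Mathlib


/-- The sign `ε(j, σ) = (-1)^{#{k ∈ σ : k < j}}`. -/
def eps {m : ℕ} (j : Fin m) (σ : Finset (Fin m)) : ℤ :=
  (-1) ^ (σ.filter (fun k => k < j)).card

/-- The augmented (reduced) simplicial cochain module on subsets of `[m]`
(a face `σ` indexes a cochain in degree `|σ| - 1`). -/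
abbrev Coch (m : ℕ) := Finset (Fin m) →₀ ℤ

/-- The simplicial coboundary of the full subcomplex `K_I`:
`δ(σ) = Σ_{j ∈ I \ σ, σ ∪ {j} ∈ K} ε(j,σ) (σ ∪ {j})`. -/
noncomputable def coB {m : ℕ} (K : Finset (Finset (Fin m))) (I : Finset (Fin m))
    (x : Coch m) : Coch m :=
  x.sum fun σ c => ∑ j ∈ (I \ σ).filter (fun j => insert j σ ∈ K),
    (c * eps j σ) • Finsupp.single (insert j σ) 1

/-- Restriction of a cochain to the full subcomplex on `I`. -/
noncomputable def resTo {m : ℕ} (I : Finset (Fin m)) (x : Coch m) : Coch m :=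
  x.filter (fun σ => σ ⊆ I)

open Finset

lemma eps_sq {m : ℕ} (j : Fin m) (σ : Finset (Fin m)) : eps j σ * eps j σ = 1 := by
  unfold eps
  rw [← pow_add]
  exact Even.neg_one_pow ⟨_, rfl⟩

lemma eps_insert {m : ℕ} (j k : Fin m) (σ : Finset (Fin m)) (hk : k ∉ σ) :
    eps j (insert k σ) = (if k < j then -1 else 1) * eps j σ := by
  unfold eps
  rw [Finset.filter_insert]
  split
  · rw [Finset.card_insert_of_notMem (fun h => hk (Finset.mem_of_mem_filter _ h)), pow_succ]
    ring
  · rw [one_mul]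

lemma eps_pair {m : ℕ} (j k : Fin m) (σ : Finset (Fin m)) (hjk : j ≠ k)
    (hj : j ∉ σ) (hk : k ∉ σ) :
    eps k σ * eps j (insert k σ) = -(eps j σ * eps k (insert j σ)) := by
  rw [eps_insert j k σ hk, eps_insert k j σ hj]
  rcases lt_or_gt_of_ne hjk with h | h
  · rw [if_neg (asymm h), if_pos h]; ring
  · rw [if_pos h, if_neg (asymm h)]; ring

lemma eps_anticomm {m : ℕ} (j v : Fin m) (σ : Finset (Fin m)) (hjv : j ≠ v)
    (hj : j ∉ σ) (hv : v ∉ σ) :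
    eps j σ * eps v σ = -(eps v (insert j σ) * eps j (insert v σ)) := by
  rw [eps_insert v j σ hj, eps_insert j v σ hv]
  rcases lt_or_gt_of_ne hjv with h | h
  · rw [if_pos h, if_neg (asymm h)]; ring
  · rw [if_neg (asymm h), if_pos h]; ring

lemma coB_apply {m : ℕ} (K : Finset (Finset (Fin m))) (I : Finset (Fin m))
    (x : Coch m) (τ : Finset (Fin m)) :
    coB K I x τ = if τ ∈ K then ∑ j ∈ τ ∩ I, x (τ.erase j) * eps j (τ.erase j) else 0 := by
  classical
  unfold coB
  rw [Finsupp.sum, Finset.sum_apply']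
  simp_rw [Finset.sum_apply', Finsupp.smul_apply, Finsupp.single_apply, smul_eq_mul, mul_ite,
    mul_one, mul_zero]
  -- extend inner sums to univ
  have step1 : ∀ σ ∈ x.support,
      (∑ j ∈ (I \ σ).filter (fun j => insert j σ ∈ K), if insert j σ = τ then x σ * eps j σ else 0)
      = ∑ j : Fin m, if (j ∈ I ∧ j ∉ σ ∧ insert j σ ∈ K ∧ insert j σ = τ) then x σ * eps j σ else 0 := by
    intro σ _
    rw [Finset.sum_filter, ← Finset.univ_inter (I \ σ), ← Finset.sum_ite_mem]
    exact Finset.sum_congr rfl (fun j _ => by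
      simp only [Finset.mem_sdiff]
      split_ifs <;> tauto)
  rw [Finset.sum_congr rfl step1, Finset.sum_comm]
  -- now for each j, the σ-sum collapses
  have step2 : ∀ j : Fin m,
      (∑ σ ∈ x.support, if (j ∈ I ∧ j ∉ σ ∧ insert j σ ∈ K ∧ insert j σ = τ) then x σ * eps j σ else 0)
      = if (j ∈ I ∧ j ∈ τ ∧ τ ∈ K) then x (τ.erase j) * eps j (τ.erase j) else 0 := by
    intro j
    rw [Finset.sum_eq_single (τ.erase j)]
    · by_cases hjτ : j ∈ τ
      · have he : insert j (τ.erase j) = τ := Finset.insert_erase hjτ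
        congr 1
        simp only [eq_iff_iff]
        constructor
        · rintro ⟨h1, _, h3, h4⟩
          exact ⟨h1, hjτ, h4 ▸ h3⟩
        · rintro ⟨h1, _, h3⟩
          exact ⟨h1, Finset.notMem_erase _ _, by rw [he]; exact h3, he⟩
      · rw [if_neg, if_neg]
        · rintro ⟨_, h2, _⟩; exact hjτ h2
        · rintro ⟨_, _, _, h4⟩
          exact hjτ (h4 ▸ Finset.mem_insert_self j _)
    · intro σ _ hne
      rw [if_neg]
      rintro ⟨_, h2, _, h4⟩
      exact hne (by rw [← h4, Finset.erase_insert h2])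
    · intro h
      rw [Finsupp.notMem_support_iff] at h
      split
      · rw [h, zero_mul]
      · rfl
  rw [Finset.sum_congr rfl (fun j _ => step2 j)]
  by_cases hτ : τ ∈ K
  · rw [if_pos hτ]
    have hc : ∀ j : Fin m, (j ∈ I ∧ j ∈ τ ∧ τ ∈ K) = (j ∈ τ ∩ I) := fun j => by
      simp [Finset.mem_inter, hτ, and_comm]
    simp_rw [hc]
    rw [Finset.sum_ite_mem, Finset.univ_inter]
  · rw [if_neg hτ]
    exact Finset.sum_eq_zero (fun j _ => by rw [if_neg (by tauto)])

lemma resTo_apply {m : ℕ} (I : Finset (Fin m)) (x : Coch m) (τ : Finset (Fin m)) :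
    resTo I x τ = if τ ⊆ I then x τ else 0 := by
  classical
  unfold resTo
  rw [Finsupp.filter_apply]

lemma coB_add {m : ℕ} (K : Finset (Finset (Fin m))) (I : Finset (Fin m)) (a b : Coch m) :
    coB K I (a + b) = coB K I a + coB K I b := by
  ext τ
  rw [Finsupp.add_apply, coB_apply, coB_apply, coB_apply]
  split
  · rw [← Finset.sum_add_distrib]
    exact Finset.sum_congr rfl (fun j _ => by rw [Finsupp.add_apply, add_mul])
  · rw [add_zero]

lemma coB_sub {m : ℕ} (K : Finset (Finset (Fin m))) (I : Finset (Fin m)) (a b : Coch m) :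
    coB K I (a - b) = coB K I a - coB K I b := by
  ext τ
  rw [Finsupp.sub_apply, coB_apply, coB_apply, coB_apply]
  split
  · rw [← Finset.sum_sub_distrib]
    exact Finset.sum_congr rfl (fun j _ => by rw [Finsupp.sub_apply, sub_mul])
  · rw [sub_zero]

lemma resTo_resTo {m : ℕ} (t I : Finset (Fin m)) (h : t ⊆ I) (y : Coch m) :
    resTo t (resTo I y) = resTo t y := by
  ext τ
  rw [resTo_apply, resTo_apply, resTo_apply]
  by_cases hτ : τ ⊆ t
  · rw [if_pos hτ, if_pos hτ, if_pos (hτ.trans h)]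
  · rw [if_neg hτ, if_neg hτ]

lemma resTo_coB {m : ℕ} (K : Finset (Finset (Fin m))) (t I : Finset (Fin m)) (h : t ⊆ I)
    (y : Coch m) : coB K t (resTo t y) = resTo t (coB K I y) := by
  ext τ
  rw [coB_apply, resTo_apply, coB_apply]
  by_cases hτ : τ ⊆ t
  · rw [if_pos hτ]
    split
    · apply Finset.sum_congr
      · rw [Finset.inter_eq_left.2 hτ, Finset.inter_eq_left.2 (hτ.trans h)]
      · intro j hj
        rw [resTo_apply, if_pos ((Finset.erase_subset _ _).trans hτ)]
    · rfl
  · rw [if_neg hτ]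
    split
    · apply Finset.sum_eq_zero
      intro j hj
      rw [resTo_apply, if_neg, zero_mul]
      intro hsub
      exact hτ (by
        rw [← Finset.insert_erase (Finset.mem_of_mem_inter_left hj)]
        exact Finset.insert_subset (Finset.mem_of_mem_inter_right hj) hsub)
    · rfl

lemma coB_coB {m : ℕ} (K : Finset (Finset (Fin m)))
    (hdown : ∀ σ ∈ K, ∀ τ ⊆ σ, τ ∈ K) (I : Finset (Fin m)) (w : Coch m) :
    coB K I (coB K I w) = 0 := by
  classical
  ext ρ
  rw [coB_apply, Finsupp.coe_zero, Pi.zero_apply]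
  split
  case isTrue hρ =>
    have hin : ∀ j ∈ ρ ∩ I, coB K I w (ρ.erase j) * eps j (ρ.erase j)
        = ∑ k ∈ (ρ ∩ I).erase j,
          w ((ρ.erase j).erase k) * eps k ((ρ.erase j).erase k) * eps j (ρ.erase j) := by
      intro j hj
      rw [coB_apply, if_pos (hdown ρ hρ _ (Finset.erase_subset _ _)), Finset.sum_mul]
      apply Finset.sum_congr
      · ext k
        simp only [Finset.mem_inter, Finset.mem_erase, Finset.mem_erase]
        tauto
      · intro k _; rfl
    rw [Finset.sum_congr rfl hin]
    -- double sum over distinct pairs; cancel via swap involution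
    have hconv : ∀ j ∈ ρ ∩ I, (∑ k ∈ (ρ ∩ I).erase j,
          w ((ρ.erase j).erase k) * eps k ((ρ.erase j).erase k) * eps j (ρ.erase j))
        = ∑ k ∈ ρ ∩ I, if k ≠ j then
            w ((ρ.erase j).erase k) * eps k ((ρ.erase j).erase k) * eps j (ρ.erase j) else 0 := by
      intro j _
      rw [← Finset.filter_ne', Finset.sum_filter]
    rw [Finset.sum_congr rfl hconv, ← Finset.sum_product']
    apply Finset.sum_involution (fun p _ => Prod.swap p)
    · rintro ⟨j, k⟩ hp
      simp only [Finset.mem_product] at hp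
      simp only [Prod.swap_prod_mk]
      by_cases hkj : k ≠ j
      · rw [if_pos hkj, if_pos (Ne.symm hkj)]
        have hjρ : j ∈ ρ := Finset.mem_of_mem_inter_left hp.1
        have hkρ : k ∈ ρ := Finset.mem_of_mem_inter_left hp.2
        set σ := (ρ.erase j).erase k with hσ
        have hσ' : (ρ.erase k).erase j = σ := by
          rw [hσ, Finset.erase_right_comm]
        have hkσ : k ∉ σ := Finset.notMem_erase _ _
        have hjσ : j ∉ σ := by rw [← hσ']; exact Finset.notMem_erase _ _
        have h1 : ρ.erase j = insert k σ := by
          rw [hσ, Finset.insert_erase (Finset.mem_erase.2 ⟨hkj, hkρ⟩)]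
        have h2 : ρ.erase k = insert j σ := by
          rw [← hσ', Finset.insert_erase (Finset.mem_erase.2 ⟨Ne.symm hkj, hjρ⟩)]
        rw [hσ', h1, h2]
        have hep := eps_pair j k σ (Ne.symm hkj) hjσ hkσ
        calc w σ * eps k σ * eps j (insert k σ) + w σ * eps j σ * eps k (insert j σ)
            = w σ * (eps k σ * eps j (insert k σ) + eps j σ * eps k (insert j σ)) := by ring
          _ = 0 := by rw [hep]; ring
      · rw [if_neg hkj, if_neg (fun h => hkj (Ne.symm h)), add_zero]
    · rintro ⟨j, k⟩ hp hne hsw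
      simp only [Prod.swap_prod_mk, Prod.mk.injEq] at hsw
      exact hne (by simp [hsw.1])
    · rintro ⟨j, k⟩ hp
      simp only [Finset.mem_product] at hp ⊢
      exact ⟨hp.2, hp.1⟩
    · rintro ⟨j, k⟩ _
      rfl
  · rfl

noncomputable def hcone {m : ℕ} (v : Fin m) (z : Coch m) : Coch m :=
  Finsupp.onFinset (z.support.image (fun σ => σ.erase v))
    (fun ρ => if v ∈ ρ then 0 else eps v ρ * z (insert v ρ))
    (by
      intro ρ h
      by_cases hv : v ∈ ρ
      · rw [if_pos hv] at h; exact absurd rfl h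
      · rw [if_neg hv] at h
        have hz : z (insert v ρ) ≠ 0 := fun h0 => h (by rw [h0, mul_zero])
        refine Finset.mem_image.2 ⟨insert v ρ, Finsupp.mem_support_iff.2 hz, ?_⟩
        rw [Finset.erase_insert hv])

lemma hcone_apply {m : ℕ} (v : Fin m) (z : Coch m) (ρ : Finset (Fin m)) :
    hcone v z ρ = if v ∈ ρ then 0 else eps v ρ * z (insert v ρ) := rfl

lemma hcone_ne_zero {m : ℕ} {v : Fin m} {z : Coch m} {ρ : Finset (Fin m)}
    (h : hcone v z ρ ≠ 0) : v ∉ ρ ∧ z (insert v ρ) ≠ 0 := by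
  rw [hcone_apply] at h
  by_cases hv : v ∈ ρ
  · rw [if_pos hv] at h; exact absurd rfl h
  · rw [if_neg hv] at h
    exact ⟨hv, fun h0 => h (by rw [h0, mul_zero])⟩

lemma cone_lemma {m : ℕ} (K : Finset (Finset (Fin m)))
    (hdown : ∀ σ ∈ K, ∀ τ ⊆ σ, τ ∈ K) (t : Finset (Fin m)) (htK : t ∈ K)
    (v : Fin m) (hv : v ∈ t) (z : Coch m)
    (hz : ∀ σ, ¬ σ ⊆ t → z σ = 0) (hzc : coB K t z = 0) :
    coB K t (hcone v z) = z := by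
  classical
  ext τ
  rw [coB_apply]
  by_cases hτt : τ ⊆ t
  · rw [if_pos (hdown t htK τ hτt)]
    by_cases hvτ : v ∈ τ
    · -- only j = v contributes
      rw [Finset.sum_eq_single v]
      · rw [hcone_apply, if_neg (Finset.notMem_erase _ _),
          Finset.insert_erase hvτ]
        linear_combination (z τ) * eps_sq v (τ.erase v)
      · intro j hj hne
        rw [hcone_apply, if_pos (Finset.mem_erase.2 ⟨fun h => hne h.symm, hvτ⟩), zero_mul]
      · intro h
        exact absurd (Finset.mem_inter.2 ⟨hvτ, hv⟩) h
    · -- use the cocycle condition at insert v τ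
      have hρt : insert v τ ⊆ t := Finset.insert_subset hv hτt
      have hρK : insert v τ ∈ K := hdown t htK _ hρt
      have h0 : coB K t z (insert v τ) = 0 := by rw [hzc]; rfl
      rw [coB_apply, if_pos hρK] at h0
      have hsplit : insert v τ ∩ t = insert v (τ ∩ t) := by
        rw [Finset.insert_inter_of_mem hv]
      have hτint : τ ∩ t = τ := Finset.inter_eq_left.2 hτt
      rw [hsplit, hτint, Finset.sum_insert hvτ, Finset.erase_insert hvτ] at h0
      -- h0 : z τ * eps v τ + ∑ j ∈ τ, z ((insert v τ).erase j) * eps j ((insert v τ).erase j) = 0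
      have key : ∀ j ∈ τ, hcone v z (τ.erase j) * eps j (τ.erase j)
          = -(eps v τ * (z ((insert v τ).erase j) * eps j ((insert v τ).erase j))) := by
        intro j hj
        have hjv : j ≠ v := fun h => hvτ (h ▸ hj)
        have hvej : v ∉ τ.erase j := fun h => hvτ (Finset.mem_of_mem_erase h)
        have hjej : j ∉ τ.erase j := Finset.notMem_erase _ _
        have he1 : (insert v τ).erase j = insert v (τ.erase j) := by
          rw [Finset.erase_insert_of_ne hjv.symm]
        have he2 : insert j (τ.erase j) = τ := Finset.insert_erase hj
        rw [hcone_apply, if_neg hvej, he1]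
        have := eps_anticomm j v (τ.erase j) hjv hjej hvej
        rw [he2] at this
        calc eps v (τ.erase j) * z (insert v (τ.erase j)) * eps j (τ.erase j)
            = z (insert v (τ.erase j)) * (eps j (τ.erase j) * eps v (τ.erase j)) := by ring
          _ = z (insert v (τ.erase j)) * -(eps v τ * eps j (insert v (τ.erase j))) := by
              rw [this]
          _ = -(eps v τ * (z (insert v (τ.erase j)) * eps j (insert v (τ.erase j)))) := by ring
      have hsum : ∑ j ∈ τ, z ((insert v τ).erase j) * eps j ((insert v τ).erase j)
          = -(z τ * eps v τ) := by linarith [h0]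
      rw [Finset.inter_eq_left.2 hτt, Finset.sum_congr rfl key, Finset.sum_neg_distrib,
        ← Finset.mul_sum, hsum]
      linear_combination (z τ) * eps_sq v τ
  · rw [hz τ hτt]
    split
    · apply Finset.sum_eq_zero
      intro j hj
      rw [hcone_apply]
      split
      · rw [zero_mul]
      · rw [hz (insert v (τ.erase j)) (fun hsub => hτt ?_), mul_zero, zero_mul]
        intro i hi
        by_cases hij : i = j
        · exact hij ▸ Finset.mem_of_mem_inter_right hj
        · exact hsub (Finset.mem_insert_of_mem (Finset.mem_erase.2 ⟨hij, hi⟩))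
    · rfl

/-- If a simplicial complex `K` on `[m]` has a top class — a nonzero class
`α ∈ H̃^{n-1}(K; ℤ)` restricting to zero in `H̃^{n-1}(K_I)` for every proper `I ⊊ [m]` —
then `K` is not wedge decomposable: `K` cannot be written as `L ∪_{Δ^t} M` with
subcomplexes `L, M ≠ K` glued along a nonempty simplex. -/
theorem topClass_not_wedgeDecomposable {m : ℕ} (K : Finset (Finset (Fin m)))
    (hempty : ∅ ∈ K) (hverts : ∀ i : Fin m, {i} ∈ K)
    (hdown : ∀ σ ∈ K, ∀ τ ⊆ σ, τ ∈ K)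
    (n : ℕ) (hn : 1 ≤ n) (x : Coch m)
    (hsupp : ∀ σ ∈ x.support, σ ∈ K ∧ σ.card = n)
    (hcocycle : coB K Finset.univ x = 0)
    (hnonzero : ¬ ∃ y : Coch m, (∀ σ ∈ y.support, σ ∈ K ∧ σ.card = n - 1) ∧
      coB K Finset.univ y = x)
    (htop : ∀ I : Finset (Fin m), I ≠ Finset.univ →
      ∃ y : Coch m, (∀ σ ∈ y.support, σ ∈ K ∧ σ ⊆ I ∧ σ.card = n - 1) ∧
        coB K I y = resTo I x) :
    ¬ ∃ (L M : Finset (Finset (Fin m))) (t : Finset (Fin m)),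
        t ≠ ∅ ∧ t ∈ K ∧
        (∀ σ ∈ L, ∀ τ ⊆ σ, τ ∈ L) ∧ (∀ σ ∈ M, ∀ τ ⊆ σ, τ ∈ M) ∧
        L ∪ M = K ∧ L ∩ M = t.powerset ∧ L ≠ K ∧ M ≠ K := by
  classical
  rintro ⟨L, M, t, htne, htK, hLdown, hMdown, hunion, hinter, hLK, hMK⟩
  obtain ⟨v, hv⟩ := Finset.nonempty_iff_ne_empty.2 htne
  set IL : Finset (Fin m) := Finset.univ.filter (fun i => ({i} : Finset (Fin m)) ∈ L) with hILdef
  set IM : Finset (Fin m) := Finset.univ.filter (fun i => ({i} : Finset (Fin m)) ∈ M) with hIMdef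
  have hiL : ∀ i : Fin m, i ∈ IL ↔ ({i} : Finset (Fin m)) ∈ L := fun i => by
    simp [hILdef]
  have hiM : ∀ i : Fin m, i ∈ IM ↔ ({i} : Finset (Fin m)) ∈ M := fun i => by
    simp [hIMdef]
  have hLM_t : ∀ σ, σ ∈ L → σ ∈ M → σ ⊆ t := fun σ h1 h2 => by
    have h : σ ∈ L ∩ M := Finset.mem_inter.2 ⟨h1, h2⟩
    rw [hinter] at h
    exact Finset.mem_powerset.1 h
  have ht_LM : ∀ σ, σ ⊆ t → σ ∈ L ∧ σ ∈ M := fun σ h => by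
    have h' : σ ∈ L ∩ M := by rw [hinter]; exact Finset.mem_powerset.2 h
    exact ⟨(Finset.mem_inter.1 h').1, (Finset.mem_inter.1 h').2⟩
  have hKLM : ∀ σ, σ ∈ K → σ ∈ L ∨ σ ∈ M := fun σ h =>
    Finset.mem_union.1 (by rw [hunion]; exact h)
  have hLsubIL : ∀ σ ∈ L, σ ⊆ IL := fun σ hσ i hi =>
    (hiL i).2 (hLdown σ hσ {i} (Finset.singleton_subset_iff.2 hi))
  have hMsubIM : ∀ σ ∈ M, σ ⊆ IM := fun σ hσ i hi =>
    (hiM i).2 (hMdown σ hσ {i} (Finset.singleton_subset_iff.2 hi))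
  have hfullL : ∀ σ, σ ∈ K → σ ⊆ IL → σ ∈ L := by
    intro σ hσ hsub
    rcases hKLM σ hσ with h | h
    · exact h
    · have hσt : σ ⊆ t := by
        intro i hi
        have h1 : ({i} : Finset (Fin m)) ∈ M := hMdown σ h {i} (Finset.singleton_subset_iff.2 hi)
        have h2 : ({i} : Finset (Fin m)) ∈ L := (hiL i).1 (hsub hi)
        exact Finset.singleton_subset_iff.1 (hLM_t _ h2 h1)
      exact (ht_LM σ hσt).1
  have hfullM : ∀ σ, σ ∈ K → σ ⊆ IM → σ ∈ M := by
    intro σ hσ hsub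
    rcases hKLM σ hσ with h | h
    · have hσt : σ ⊆ t := by
        intro i hi
        have h1 : ({i} : Finset (Fin m)) ∈ L := hLdown σ h {i} (Finset.singleton_subset_iff.2 hi)
        have h2 : ({i} : Finset (Fin m)) ∈ M := (hiM i).1 (hsub hi)
        exact Finset.singleton_subset_iff.1 (hLM_t _ h1 h2)
      exact (ht_LM σ hσt).2
    · exact h
  have htIL : t ⊆ IL := fun i hi =>
    (hiL i).2 (ht_LM {i} (Finset.singleton_subset_iff.2 hi)).1
  have htIM : t ⊆ IM := fun i hi =>
    (hiM i).2 (ht_LM {i} (Finset.singleton_subset_iff.2 hi)).2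
  have hILne : IL ≠ Finset.univ := by
    intro he
    apply hLK
    have hML : M ⊆ L := by
      intro σ hσ
      have hσt : σ ⊆ t := by
        intro i hi
        have h1 : ({i} : Finset (Fin m)) ∈ M := hMdown σ hσ {i} (Finset.singleton_subset_iff.2 hi)
        have h2 : ({i} : Finset (Fin m)) ∈ L := (hiL i).1 (he ▸ Finset.mem_univ i)
        exact Finset.singleton_subset_iff.1 (hLM_t _ h2 h1)
      exact (ht_LM σ hσt).1
    rw [← hunion, Finset.union_eq_left.2 hML]
  have hIMne : IM ≠ Finset.univ := by
    intro he
    apply hMK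
    have hLM : L ⊆ M := by
      intro σ hσ
      have hσt : σ ⊆ t := by
        intro i hi
        have h1 : ({i} : Finset (Fin m)) ∈ L := hLdown σ hσ {i} (Finset.singleton_subset_iff.2 hi)
        have h2 : ({i} : Finset (Fin m)) ∈ M := (hiM i).1 (he ▸ Finset.mem_univ i)
        exact Finset.singleton_subset_iff.1 (hLM_t _ h1 h2)
      exact (ht_LM σ hσt).2
    rw [← hunion, Finset.union_eq_right.2 hLM]
  have hIunion : IL ∪ IM = Finset.univ := by
    ext i
    simp only [Finset.mem_union, Finset.mem_univ, iff_true]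
    rcases hKLM {i} (hverts i) with h | h
    · exact Or.inl ((hiL i).2 h)
    · exact Or.inr ((hiM i).2 h)
  have hIinter : IL ∩ IM = t := by
    ext i
    simp only [Finset.mem_inter]
    constructor
    · rintro ⟨h1, h2⟩
      exact Finset.singleton_subset_iff.1 (hLM_t _ ((hiL i).1 h1) ((hiM i).1 h2))
    · intro hi
      exact ⟨htIL hi, htIM hi⟩
  obtain ⟨yL, hyLs, hyL⟩ := htop IL hILne
  obtain ⟨yM, hyMs, hyM⟩ := htop IM hIMne
  set z : Coch m := resTo t yL - resTo t yM with hzdef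
  have hz0 : ∀ σ, ¬ σ ⊆ t → z σ = 0 := by
    intro σ h
    rw [hzdef, Finsupp.sub_apply, resTo_apply, resTo_apply, if_neg h, if_neg h, sub_zero]
  have hzsupp : ∀ ν, z ν ≠ 0 → ν ∈ K ∧ ν.card = n - 1 := by
    intro ν h
    rw [hzdef, Finsupp.sub_apply, resTo_apply, resTo_apply] at h
    by_cases hνt : ν ⊆ t
    · rw [if_pos hνt, if_pos hνt] at h
      by_cases h1 : yL ν = 0
      · have h2 : yM ν ≠ 0 := fun h0 => h (by rw [h1, h0, sub_zero])
        have := hyMs ν (Finsupp.mem_support_iff.2 h2)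
        exact ⟨this.1, this.2.2⟩
      · have := hyLs ν (Finsupp.mem_support_iff.2 h1)
        exact ⟨this.1, this.2.2⟩
    · rw [if_neg hνt, if_neg hνt, sub_zero] at h
      exact absurd rfl h
  have hcoBtyL : coB K t (resTo t yL) = resTo t x := by
    rw [resTo_coB K t IL htIL yL, hyL, resTo_resTo t IL htIL]
  have hcoBtyM : coB K t (resTo t yM) = resTo t x := by
    rw [resTo_coB K t IM htIM yM, hyM, resTo_resTo t IM htIM]
  have hzc : coB K t z = 0 := by
    rw [hzdef, coB_sub, hcoBtyL, hcoBtyM, sub_self]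
  set w : Coch m := hcone v z with hwdef
  have hw : coB K t w = z := cone_lemma K hdown t htK v hv z hz0 hzc
  set yM' : Coch m := yM + coB K IM w with hyM'def
  have hyM'c : coB K IM yM' = resTo IM x := by
    rw [hyM'def, coB_add, coB_coB K hdown, add_zero, hyM]
  have hwsub : ∀ ρ, w ρ ≠ 0 → ρ ⊆ t ∧ v ∉ ρ ∧ z (insert v ρ) ≠ 0 := by
    intro ρ h
    obtain ⟨h1, h2⟩ := hcone_ne_zero h
    refine ⟨?_, h1, h2⟩
    have hsub : insert v ρ ⊆ t := by
      by_contra hc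
      exact h2 (hz0 _ hc)
    exact (Finset.subset_insert v ρ).trans hsub
  have hcoBw_sub : ∀ σ, (coB K IM w) σ ≠ 0 → σ ∈ K ∧ σ ⊆ IM ∧ σ.card = n - 1 := by
    intro σ h
    rw [coB_apply] at h
    by_cases hσK : σ ∈ K
    case neg => rw [if_neg hσK] at h; exact absurd rfl h
    rw [if_pos hσK] at h
    obtain ⟨j, hj, hjne⟩ := Finset.exists_ne_zero_of_sum_ne_zero h
    have hwne : w (σ.erase j) ≠ 0 := fun h0 => hjne (by rw [h0, zero_mul])
    obtain ⟨hρt, hvρ, hzρ⟩ := hwsub _ hwne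
    have hjσ : j ∈ σ := Finset.mem_of_mem_inter_left hj
    have hjIM : j ∈ IM := Finset.mem_of_mem_inter_right hj
    have hcard1 : (insert v (σ.erase j)).card = (σ.erase j).card + 1 :=
      Finset.card_insert_of_notMem hvρ
    have hcard2 : (insert v (σ.erase j)).card = n - 1 := (hzsupp _ hzρ).2
    have hcard3 : (σ.erase j).card + 1 = σ.card := Finset.card_erase_add_one hjσ
    refine ⟨hσK, ?_, by omega⟩
    intro i hi
    by_cases hij : i = j
    · exact hij ▸ hjIM
    · exact htIM (hρt (Finset.mem_erase.2 ⟨hij, hi⟩))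
  set Y : Coch m := yL + yM' - resTo t yL with hYdef
  apply hnonzero
  refine ⟨Y, ?_, ?_⟩
  · intro σ hσ
    rw [Finsupp.mem_support_iff] at hσ
    have hcases : yL σ ≠ 0 ∨ yM σ ≠ 0 ∨ (coB K IM w) σ ≠ 0 ∨ resTo t yL σ ≠ 0 := by
      by_contra hc
      push_neg at hc
      obtain ⟨h1, h2, h3, h4⟩ := hc
      apply hσ
      rw [hYdef, Finsupp.sub_apply, Finsupp.add_apply, hyM'def, Finsupp.add_apply,
        h1, h2, h3, h4]
      ring
    rcases hcases with h | h | h | h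
    · have := hyLs σ (Finsupp.mem_support_iff.2 h)
      exact ⟨this.1, this.2.2⟩
    · have := hyMs σ (Finsupp.mem_support_iff.2 h)
      exact ⟨this.1, this.2.2⟩
    · exact ⟨(hcoBw_sub σ h).1, (hcoBw_sub σ h).2.2⟩
    · rw [resTo_apply] at h
      by_cases hσt : σ ⊆ t
      · rw [if_pos hσt] at h
        have := hyLs σ (Finsupp.mem_support_iff.2 h)
        exact ⟨this.1, this.2.2⟩
      · rw [if_neg hσt] at h
        exact absurd rfl h
  · ext τ
    rw [coB_apply]
    by_cases hτK : τ ∈ K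
    case neg =>
      rw [if_neg hτK]
      by_contra hne
      exact hτK (hsupp τ (Finsupp.mem_support_iff.2 (fun h0 => hne h0.symm))).1
    rw [if_pos hτK, Finset.inter_univ]
    have hYapp : ∀ σ', Y σ' = yL σ' + yM' σ' - resTo t yL σ' := fun σ' => by
      rw [hYdef, Finsupp.sub_apply, Finsupp.add_apply]
    simp only [hYapp, sub_mul, add_mul]
    rw [Finset.sum_sub_distrib, Finset.sum_add_distrib]
    have hsplit : ∀ (A : Finset (Fin m)) (F : Fin m → ℤ),
        ∑ j ∈ τ, F j = ∑ j ∈ τ ∩ A, F j + ∑ j ∈ τ \ A, F j := fun A F =>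
      (Finset.sum_inter_add_sum_sdiff τ A F).symm
    have hLeq : ∀ j ∈ τ \ IL, yL (τ.erase j) = resTo t yL (τ.erase j) := by
      intro j hj
      rw [Finset.mem_sdiff] at hj
      by_cases hσt : τ.erase j ⊆ t
      · rw [resTo_apply, if_pos hσt]
      · rw [resTo_apply, if_neg hσt]
        by_contra hne
        have hσIL : τ.erase j ⊆ IL :=
          (hyLs _ (Finsupp.mem_support_iff.2 hne)).2.1
        have hτM : τ ∈ M := by
          rcases hKLM τ hτK with h | h
          · exact absurd ((hLsubIL τ h) hj.1) hj.2
          · exact h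
        have hσM : τ.erase j ∈ M := hMdown τ hτM _ (Finset.erase_subset _ _)
        have hσK : τ.erase j ∈ K := hdown τ hτK _ (Finset.erase_subset _ _)
        have hσL : τ.erase j ∈ L := hfullL _ hσK hσIL
        exact hσt (hLM_t _ hσL hσM)
    have hF4 : ∀ σ', σ' ⊆ t → yM' σ' = resTo t yL σ' := by
      intro σ' hσt
      rw [hyM'def, Finsupp.add_apply]
      have h1 : (coB K IM w) σ' = (coB K t w) σ' := by
        rw [coB_apply, coB_apply]
        have he : σ' ∩ IM = σ' ∩ t := by
          rw [Finset.inter_eq_left.2 (hσt.trans htIM), Finset.inter_eq_left.2 hσt]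
        rw [he]
      rw [h1, hw, hzdef, Finsupp.sub_apply, resTo_apply, resTo_apply]
      simp only [if_pos hσt]
      ring
    have hMeq : ∀ j ∈ τ \ IM, yM' (τ.erase j) = resTo t yL (τ.erase j) := by
      intro j hj
      rw [Finset.mem_sdiff] at hj
      by_cases hσt : τ.erase j ⊆ t
      · exact hF4 _ hσt
      · rw [resTo_apply, if_neg hσt]
        by_contra hne
        have hσIM : τ.erase j ⊆ IM := by
          rw [hyM'def, Finsupp.add_apply] at hne
          by_cases h1 : yM (τ.erase j) = 0
          · have h2 : (coB K IM w) (τ.erase j) ≠ 0 := fun h0 => hne (by rw [h1, h0, add_zero])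
            exact (hcoBw_sub _ h2).2.1
          · exact (hyMs _ (Finsupp.mem_support_iff.2 h1)).2.1
        have hτL : τ ∈ L := by
          rcases hKLM τ hτK with h | h
          · exact h
          · exact absurd ((hMsubIM τ h) hj.1) hj.2
        have hσL : τ.erase j ∈ L := hLdown τ hτL _ (Finset.erase_subset _ _)
        have hσK : τ.erase j ∈ K := hdown τ hτK _ (Finset.erase_subset _ _)
        have hσM : τ.erase j ∈ M := hfullM _ hσK hσIM
        exact hσt (hLM_t _ hσL hσM)
    have hSL : ∑ j ∈ τ, yL (τ.erase j) * eps j (τ.erase j)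
        = (resTo IL x) τ + ∑ j ∈ τ \ IL, resTo t yL (τ.erase j) * eps j (τ.erase j) := by
      rw [hsplit IL]
      congr 1
      · have h1 : (coB K IL yL) τ = (resTo IL x) τ := by rw [hyL]
        rw [coB_apply, if_pos hτK] at h1
        exact h1
      · exact Finset.sum_congr rfl (fun j hj => by rw [hLeq j hj])
    have hSM : ∑ j ∈ τ, yM' (τ.erase j) * eps j (τ.erase j)
        = (resTo IM x) τ + ∑ j ∈ τ \ IM, resTo t yL (τ.erase j) * eps j (τ.erase j) := by
      rw [hsplit IM]
      congr 1
      · have h1 : (coB K IM yM') τ = (resTo IM x) τ := by rw [hyM'c]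
        rw [coB_apply, if_pos hτK] at h1
        exact h1
      · exact Finset.sum_congr rfl (fun j hj => by rw [hMeq j hj])
    have hSu : ∑ j ∈ τ, resTo t yL (τ.erase j) * eps j (τ.erase j)
        = (resTo t x) τ + (∑ j ∈ τ \ IL, resTo t yL (τ.erase j) * eps j (τ.erase j)
            + ∑ j ∈ τ \ IM, resTo t yL (τ.erase j) * eps j (τ.erase j)) := by
      rw [hsplit t]
      congr 1
      · have h1 : (coB K t (resTo t yL)) τ = (resTo t x) τ := by rw [hcoBtyL]
        rw [coB_apply, if_pos hτK] at h1
        exact h1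
      · have hsd : τ \ t = (τ \ IL) ∪ (τ \ IM) := by
          rw [← hIinter]
          ext i
          simp only [Finset.mem_sdiff, Finset.mem_union, Finset.mem_inter]
          tauto
        have hdisj : Disjoint (τ \ IL) (τ \ IM) := by
          rw [Finset.disjoint_left]
          intro a h1 h2
          rw [Finset.mem_sdiff] at h1 h2
          have : a ∈ IL ∪ IM := hIunion ▸ Finset.mem_univ a
          rcases Finset.mem_union.1 this with h | h
          · exact h1.2 h
          · exact h2.2 h
        rw [hsd, Finset.sum_union hdisj]
    rw [hSL, hSM, hSu]
    have hor : τ ⊆ IL ∨ τ ⊆ IM := by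
      rcases hKLM τ hτK with h | h
      · exact Or.inl (hLsubIL τ h)
      · exact Or.inr (hMsubIM τ h)
    have hfinal : (resTo IL x) τ + (resTo IM x) τ - (resTo t x) τ = x τ := by
      rw [resTo_apply, resTo_apply, resTo_apply]
      by_cases h1 : τ ⊆ IL <;> by_cases h2 : τ ⊆ IM
      · have hτt : τ ⊆ t := by rw [← hIinter]; exact Finset.subset_inter h1 h2
        rw [if_pos h1, if_pos h2, if_pos hτt]; ring
      · rw [if_pos h1, if_neg h2, if_neg (fun h => h2 (h.trans htIM))]; ring
      · rw [if_neg h1, if_pos h2, if_neg (fun h => h1 (h.trans htIL))]; ring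
      · rcases hor with h | h
        · exact absurd h h1
        · exact absurd h h2
    linarith [hfinal]
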